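/- arXiv:1701.03766 — 5 statements merged into one kernel-verified Lean document; each statement's English description precedes it below -/
import Mathlib

section
/- If n is a composite number with 2^(n-1) ≡ 1 (mod n), then 2^n - 1 is also composite and satisfies 2^(2^n - 2) ≡ 1 (mod 2^n - 1). Consequently, there are infinitely many 2-pseudoprimes. -/
/-!
If `d` is a proper divisor of `n`, then `2 ^ d - 1` is a proper divisor of `2 ^ n - 1`. If moreover
`n ∣ 2 ^ (n - 1) - 1`, then `n ∣ 2 ^ n - 2 = (2 ^ n - 1) - 1`, hence
`2 ^ n - 1 ∣ 2 ^ (2 ^ n - 2) - 1`. So `n ↦ 2 ^ n - 1` maps 2-pseudoprimes to strictly larger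
2-pseudoprimes, and iterating it from one 2-pseudoprime produces infinitely many.
-/

lemma Set.infinite_of_nonempty_of_forall_exists_gt {α : Type*} [Preorder α] {s : Set α}
    (hs : s.Nonempty) (h : ∀ a ∈ s, ∃ b ∈ s, a < b) : s.Infinite := by
  intro hfin
  obtain ⟨a, ha⟩ := hs
  obtain ⟨m, -, hm⟩ := hfin.exists_le_maximal ha
  obtain ⟨b, hb, hmb⟩ := h m hm.prop
  exact hmb.not_ge (hm.le_of_ge hb hmb.le)

namespace Nat

lemma not_prime_two_pow_sub_one {n : ℕ} (hn : ¬ n.Prime) : ¬ (2 ^ n - 1).Prime := by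
  rcases eq_or_ne n 1 with rfl | hn1
  · decide
  · exact fun hP => hn (prime_of_pow_sub_one_prime hn1 hP).2

lemma lt_two_pow_sub_one {n : ℕ} (hn : 1 < n) : n < 2 ^ n - 1 := by
  have hn' : n - 1 < 2 ^ (n - 1) := (n - 1).lt_two_pow_self
  have hpow : 2 ^ n = 2 * 2 ^ (n - 1) := by rw [← pow_succ']; congr 1; omega
  omega

lemma two_pow_sub_two_eq (n : ℕ) : 2 ^ n - 2 = 2 * (2 ^ (n - 1) - 1) := by
  rcases n with _ | n
  · rfl
  · rw [pow_succ', Nat.add_sub_cancel, Nat.mul_sub_one]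

lemma ProbablePrime.two_pow_sub_one {n : ℕ} (h : ProbablePrime n 2) :
    ProbablePrime (2 ^ n - 1) 2 := by
  have hdvd : n ∣ 2 ^ n - 2 := two_pow_sub_two_eq n ▸ h.mul_left 2
  unfold ProbablePrime
  rw [Nat.sub_sub]
  exact pow_sub_one_dvd_pow_sub_one 2 hdvd

lemma FermatPsp.two_pow_sub_one {n : ℕ} (h : FermatPsp n 2) : FermatPsp (2 ^ n - 1) 2 :=
  ⟨h.1.two_pow_sub_one, not_prime_two_pow_sub_one h.2.1, h.2.2.trans (lt_two_pow_sub_one h.2.2)⟩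

lemma fermatPsp_two_iff (n : ℕ) :
    FermatPsp n 2 ↔ 1 < n ∧ ¬ n.Prime ∧ 2 ^ (n - 1) ≡ 1 [MOD n] := by
  rw [FermatPsp, probablePrime_iff_modEq n one_le_two]
  tauto

end Nat

theorem two_pseudoprime_lift (n : ℕ) (hn : 1 < n) (hcomp : ¬ Nat.Prime n)
    (hps : 2 ^ (n - 1) ≡ 1 [MOD n]) :
    ¬ Nat.Prime (2 ^ n - 1) ∧ 2 ^ (2 ^ n - 2) ≡ 1 [MOD 2 ^ n - 1] ∧
      {k : ℕ | 1 < k ∧ ¬ Nat.Prime k ∧ 2 ^ (k - 1) ≡ 1 [MOD k]}.Infinite := by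
  have hpsp : n.FermatPsp 2 := (Nat.fermatPsp_two_iff n).2 ⟨hn, hcomp, hps⟩
  obtain ⟨-, hnp, hmod⟩ := (Nat.fermatPsp_two_iff _).1 hpsp.two_pow_sub_one
  refine ⟨hnp, by rwa [Nat.sub_sub] at hmod, ?_⟩
  simp_rw [← Nat.fermatPsp_two_iff]
  exact Set.infinite_of_nonempty_of_forall_exists_gt ⟨n, hpsp⟩
    fun k hk => ⟨2 ^ k - 1, hk.two_pow_sub_one, Nat.lt_two_pow_sub_one hk.2.2⟩
end

section
/- Let m ≥ 2 with m - 1 dividing 2^(m-2) - 1 and m - 1 ≡ 5 (mod 10). Then m - 1 ≡ 5 (mod 20). -/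
lemma orderOf_two_zmod_five : orderOf (2 : ZMod 5) = 4 :=
  orderOf_eq_prime_pow (p := 2) (n := 1) (by decide) (by decide)

lemma two_pow_modEq_one_five_iff (k : ℕ) : 2 ^ k ≡ 1 [MOD 5] ↔ 4 ∣ k := by
  rw [← ZMod.natCast_eq_natCast_iff, ← orderOf_two_zmod_five, orderOf_dvd_iff_pow_eq_one]
  push_cast
  rfl

theorem m_sub_one_five_mod_twenty_general (m : ℕ)
    (hdvd : (m - 1) ∣ 2 ^ (m - 2) - 1) (h10 : m - 1 ≡ 5 [MOD 10]) :
    m - 1 ≡ 5 [MOD 20] := by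
  have h5 : 5 ∣ m - 1 :=
    Nat.modEq_zero_iff_dvd.mp ((h10.of_dvd (by norm_num : 5 ∣ 10)).trans rfl)
  have hpow : 2 ^ (m - 2) ≡ 1 [MOD 5] :=
    ((Nat.modEq_iff_dvd' Nat.one_le_two_pow).mpr (h5.trans hdvd)).symm
  have h4 : 4 ∣ m - 2 := (two_pow_modEq_one_five_iff _).mp hpow
  unfold Nat.ModEq at h10 ⊢
  omega

theorem m_sub_one_five_mod_twenty (m : ℕ) (hm : 2 ≤ m)
    (hdvd : (m - 1) ∣ 2 ^ (m - 2) - 1) (h10 : m - 1 ≡ 5 [MOD 10]) :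
    m - 1 ≡ 5 [MOD 20] :=
  m_sub_one_five_mod_twenty_general m hdvd h10
end

section
/- Let m ≥ 2, α a primitive element of F_{2^{2m}}, f a d-form function from F_{2^{2m}} to F_{2^m} with difference-balanced property (gcd(d, 2^{2m}-1)=1), C_1' a (2^m - 1, 2^{m-1} - 1, 2^{m-2} - 1) difference set in Z_{2^m - 1}, C_1 = {(2^m + 1)i : i ∈ C_1'}, C_2 = {i ∈ Z_{2^{2m}-1} : f(α^i) = 1}, and C = C_1 + C_2 (sumset mod 2^{2m} - 1). Then for every τ = (2^m + 1)τ_1 with τ_1 ∈ {1, ..., 2^m - 2}, the difference function satisfies d_C(τ) = |C ∩ (C + τ)| = 2^{2m-2} - 2^m. -/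
/-!
Write `q = 2^m` and `n = q² - 1 = (q + 1)(q - 1)`. Reduction modulo `q + 1` kills `C₁` and the
shift `τ`, and it is injective on `C₂`: if `i ≡ j (mod q + 1)` then `α^(j-i)` is a `(q - 1)`-th root
of unity, hence lies in `F`, and the `d`-form property together with `gcd(d, q - 1) = 1` turns
`f(α^i) = f(α^j) = 1` into `α^i = α^j`. So every element of `C` is uniquely `c₁ + c₂`, and
`C ∩ (C + τ) = (C₁ ∩ (C₁ + τ)) + C₂` has `(2^(m-2) - 1) · |C₂|` elements. Difference balance at a
shift `z ∈ F \ {0, 1}` and `b = 0` says that `f` has exactly `q - 1` nonzero zeros, the `d`-form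
property makes all nonzero values equally frequent, and so `|C₂| = #{x ≠ 0 | f x = 1} = q`.
-/

open Finset Pointwise

section Sumset

variable {G K Φ : Type*} [AddCommGroup G] [AddGroup K] [FunLike Φ G K] [AddMonoidHomClass Φ G K]

theorem injOn_add_of_map_eq_zero (π : Φ) {A B : Finset G} (hA : ∀ a ∈ A, π a = 0)
    (hB : Set.InjOn π B) : (A ×ˢ B : Set (G × G)).InjOn fun p => p.1 + p.2 := by
  rintro ⟨a, b⟩ ⟨ha, hb⟩ ⟨a', b'⟩ ⟨ha', hb'⟩ (h : a + b = a' + b')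
  have hbb' : b = b' := hB hb hb' <| by
    simpa only [map_add, hA a ha, hA a' ha', zero_add] using congrArg π h
  subst hbb'
  simpa using h

theorem add_inter_image_add_eq [DecidableEq G] (π : Φ) {A B : Finset G} {t : G}
    (hA : ∀ a ∈ A, π a = 0) (hB : Set.InjOn π B) (ht : π t = 0) :
    (A + B) ∩ (A + B).image (· + t) = (A ∩ A.image (· + t)) + B := by
  ext c
  simp only [mem_inter, mem_image, mem_add]
  constructor
  · rintro ⟨⟨a, ha, b, hb, rfl⟩, _, ⟨a', ha', b', hb', rfl⟩, h⟩
    have hbb' : b' = b := hB hb' hb <| by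
      simpa only [map_add, hA a ha, hA a' ha', ht, zero_add, add_zero] using congrArg π h
    subst hbb'
    rw [add_right_comm] at h
    exact ⟨a, ⟨ha, a', ha', add_right_cancel h⟩, b', hb', rfl⟩
  · rintro ⟨a, ⟨ha, a', ha', rfl⟩, b, hb, rfl⟩
    exact ⟨⟨_, ha, b, hb, rfl⟩, _, ⟨a', ha', b, hb, rfl⟩, add_right_comm _ _ _⟩

theorem card_add_inter_image_add_eq_mul [DecidableEq G] (π : Φ) {A B : Finset G} {t : G}
    (hA : ∀ a ∈ A, π a = 0) (hB : Set.InjOn π B) (ht : π t = 0) :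
    #((A + B) ∩ (A + B).image (· + t)) = #(A ∩ A.image (· + t)) * #B := by
  rw [add_inter_image_add_eq π hA hB ht, card_add_iff.mpr]
  exact injOn_add_of_map_eq_zero π (fun a ha => hA a (mem_of_mem_inter_left ha)) hB

end Sumset

theorem card_image_inter_image_add_of_injective {G H : Type*} [AddCommGroup G] [AddCommGroup H]
    [DecidableEq G] [DecidableEq H] (φ : G →+ H) (hφ : Function.Injective φ) (A : Finset G)
    (s : G) : #(A.image φ ∩ (A.image φ).image (· + φ s)) = #(A ∩ A.image (s + ·)) := by
  have : (A.image φ).image (· + φ s) = (A.image (s + ·)).image φ := by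
    simp only [image_image]
    exact image_congr fun a _ => by simp [add_comm]
  rw [this, ← image_inter _ _ hφ, card_image_of_injective _ hφ]

namespace ZMod

variable {a n : ℕ} [NeZero a]

def scaleHom (b : ℕ) (h : b * a = n) : ZMod a →+ ZMod n :=
  AddMonoidHom.mk' (fun i => b * i.val) fun i j => by
    have hmod : b * ((i.val + j.val) % a) ≡ b * (i.val + j.val) [MOD n] :=
      h ▸ (Nat.mod_modEq _ a).mul_left' b
    simpa only [val_add, Nat.cast_mul, Nat.cast_add, mul_add] using
      (natCast_eq_natCast_iff _ _ _).mpr hmod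

theorem scaleHom_apply (b : ℕ) (h : b * a = n) (i : ZMod a) : scaleHom b h i = b * i.val := rfl

theorem scaleHom_injective {b : ℕ} (hb : b ≠ 0) (h : b * a = n) :
    Function.Injective (scaleHom b h) := by
  intro i j hij
  have hlt : ∀ k : ZMod a, b * k.val < n := fun k =>
    h ▸ Nat.mul_lt_mul_of_pos_left k.val_lt (Nat.pos_of_ne_zero hb)
  have := congrArg val hij
  simp only [scaleHom_apply, ← Nat.cast_mul, val_cast_of_lt (hlt _)] at this
  exact val_injective a (Nat.eq_of_mul_eq_mul_left (Nat.pos_of_ne_zero hb) this)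

theorem castHom_scaleHom (b : ℕ) (h : b * a = n) (i : ZMod a) :
    castHom (Dvd.intro a h) (ZMod b) (scaleHom b h i) = 0 := by
  rw [scaleHom_apply, map_mul, map_natCast, natCast_self, zero_mul]

end ZMod

section DForm

variable {F E : Type*} [Field F] [Field E] [Fintype F] [Algebra F E] {d : ℕ}
  {f : E → F}

theorem bijective_pow_units_of_coprime (hd : d.Coprime (Fintype.card F - 1)) :
    Function.Bijective fun u : Fˣ => u ^ d :=
  (powCoprime (G := Fˣ) <| by
    rw [Nat.card_units, Nat.card_eq_fintype_card]; exact hd.symm).bijective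

theorem exists_pow_eq_of_coprime (hd : d.Coprime (Fintype.card F - 1)) {b : F} (hb : b ≠ 0) :
    ∃ y : F, y ≠ 0 ∧ y ^ d = b := by
  obtain ⟨u, hu⟩ := (bijective_pow_units_of_coprime hd).2 (Units.mk0 b hb)
  exact ⟨u, u.ne_zero, by simpa using congrArg Units.val hu⟩

theorem eq_one_of_pow_eq_one_of_coprime (hd : d.Coprime (Fintype.card F - 1)) {y : F}
    (hy : y ≠ 0) (h : y ^ d = 1) : y = 1 := by
  have : Units.mk0 y hy ^ d = 1 ^ d := Units.ext (by simpa using h)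
  simpa using congrArg Units.val ((bijective_pow_units_of_coprime hd).1 this)

theorem exists_algebraMap_eq_of_pow_card_sub_one_eq_one {x : E}
    (hx : x ^ (Fintype.card F - 1) = 1) : ∃ y : F, algebraMap F E y = x := by
  have hq : NeZero (Fintype.card F - 1) := ⟨Nat.sub_ne_zero_of_lt Fintype.one_lt_card⟩
  have hx0 : x ≠ 0 := by
    rintro rfl
    exact zero_ne_one ((zero_pow hq.out).symm.trans hx)
  let ι : Fˣ →* Eˣ := Units.map (algebraMap F E : F →* E)
  have hι : Function.Injective ι := Units.map_injective (algebraMap F E).injective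
  have hle : ι.range ≤ rootsOfUnity (Fintype.card F - 1) E := by
    rintro _ ⟨u, rfl⟩
    rw [mem_rootsOfUnity, ← map_pow, ← Nat.card_eq_fintype_card, ← Nat.card_units,
      pow_card_eq_one', map_one]
  have hrange : ι.range = rootsOfUnity (Fintype.card F - 1) E :=
    Subgroup.eq_of_le_of_card_ge hle <| (card_rootsOfUnity ..).trans_eq <| by
      rw [MonoidHom.range_eq_map, Subgroup.card_map_of_injective hι, Subgroup.card_top,
        Nat.card_units, Nat.card_eq_fintype_card]
  obtain ⟨u, hu⟩ : Units.mk0 x hx0 ∈ ι.range := by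
    rw [hrange, mem_rootsOfUnity']
    exact hx
  exact ⟨u, congrArg Units.val hu⟩

theorem card_filter_map_eq_of_ne_zero [Fintype E] [DecidableEq E] [DecidableEq F]
    (hf : ∀ (x : E) (y : F), f (algebraMap F E y * x) = y ^ d * f x)
    (hd : d.Coprime (Fintype.card F - 1)) {b : F} (hb : b ≠ 0) :
    #{x : E | x ≠ 0 ∧ f x = b} = #{x : E | x ≠ 0 ∧ f x = 1} := by
  obtain ⟨y, hy, rfl⟩ := exists_pow_eq_of_coprime hd hb
  have hy' : algebraMap F E y ≠ 0 := by simpa using hy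
  refine card_nbij' (algebraMap F E y⁻¹ * ·) (algebraMap F E y * ·) ?_ ?_ ?_ ?_
  · intro x hx
    simp only [coe_filter, Set.mem_ofPred_eq, mem_univ, true_and] at hx ⊢
    refine ⟨by simp [hy, hx.1], ?_⟩
    rw [hf, hx.2, inv_pow, inv_mul_cancel₀ (pow_ne_zero _ hy)]
  · intro x hx
    simp only [coe_filter, Set.mem_ofPred_eq, mem_univ, true_and] at hx ⊢
    exact ⟨mul_ne_zero hy' hx.1, by rw [hf, hx.2, mul_one]⟩
  · intro x _
    simp [hy']
  · intro x _
    simp [hy']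

theorem card_filter_map_eq_zero [Fintype E] [DecidableEq E] [DecidableEq F]
    (hf : ∀ (x : E) (y : F), f (algebraMap F E y * x) = y ^ d * f x)
    (hd : d.Coprime (Fintype.card F - 1)) (hF : 2 < Fintype.card F)
    (hdb : ∀ z : E, z ≠ 0 → z ≠ 1 →
      #{x | x ≠ 0 ∧ f (x * z) - f x = 0} = Fintype.card F - 1) :
    #{x : E | x ≠ 0 ∧ f x = 0} = Fintype.card F - 1 := by
  obtain ⟨y, hy0, hy1⟩ : ∃ y ∈ univ.erase (0 : F), y ≠ 1 :=
    exists_mem_ne (by rw [card_erase_of_mem (mem_univ _), card_univ]; omega) 1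
  have hyd : y ^ d - 1 ≠ 0 := sub_ne_zero.mpr fun h =>
    hy1 (eq_one_of_pow_eq_one_of_coprime hd (ne_of_mem_erase hy0) h)
  rw [← hdb (algebraMap F E y) (by simpa using ne_of_mem_erase hy0) (by simpa using hy1)]
  refine congrArg card (filter_congr fun x _ => and_congr_right fun _ => ?_)
  rw [mul_comm, hf, ← sub_one_mul, mul_eq_zero, or_iff_right hyd]

theorem card_filter_map_eq_one [Fintype E] [DecidableEq E] [DecidableEq F]
    (hf : ∀ (x : E) (y : F), f (algebraMap F E y * x) = y ^ d * f x)
    (hE : Fintype.card E = Fintype.card F ^ 2) (hd : d.Coprime (Fintype.card F - 1))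
    (hF : 2 < Fintype.card F)
    (hdb : ∀ z : E, z ≠ 0 → z ≠ 1 →
      #{x | x ≠ 0 ∧ f (x * z) - f x = 0} = Fintype.card F - 1) :
    #{x : E | x ≠ 0 ∧ f x = 1} = Fintype.card F := by
  set q := Fintype.card F
  have hsum : q ^ 2 - 1 = (q - 1) + (q - 1) * #{x : E | x ≠ 0 ∧ f x = 1} :=
    calc q ^ 2 - 1 = #{x : E | x ≠ 0} := by
          rw [filter_ne', card_erase_of_mem (mem_univ _), card_univ, hE]
      _ = ∑ b : F, #{x : E | x ≠ 0 ∧ f x = b} := by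
          rw [card_eq_sum_card_fiberwise (f := f) (t := univ) fun _ _ => mem_univ _]
          simp only [filter_filter]
      _ = #{x : E | x ≠ 0 ∧ f x = 0} + ∑ b ∈ univ.erase 0, #{x : E | x ≠ 0 ∧ f x = b} :=
          (add_sum_erase _ _ (mem_univ 0)).symm
      _ = (q - 1) + (q - 1) * #{x : E | x ≠ 0 ∧ f x = 1} := by
          rw [card_filter_map_eq_zero hf hd hF hdb,
            sum_congr rfl fun b hb => card_filter_map_eq_of_ne_zero hf hd (ne_of_mem_erase hb),
            sum_const, card_erase_of_mem (mem_univ _), card_univ, smul_eq_mul]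
  have hsq : q ^ 2 - 1 = (q - 1) + (q - 1) * q := by
    zify [show 1 ≤ q by omega, Nat.one_le_pow 2 q (by omega)]
    ring
  exact Nat.eq_of_mul_eq_mul_left (show 0 < q - 1 by omega) (by omega)

theorem eq_one_of_map_mul_eq (hf : ∀ (x : E) (y : F), f (algebraMap F E y * x) = y ^ d * f x)
    (hd : d.Coprime (Fintype.card F - 1)) {w z : E}
    (hw : w ^ (Fintype.card F - 1) = 1) (h : f (w * z) = f z) (hz : f z ≠ 0) : w = 1 := by
  obtain ⟨y, rfl⟩ := exists_algebraMap_eq_of_pow_card_sub_one_eq_one hw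
  have hy : y ≠ 0 := by
    rintro rfl
    rw [map_zero, zero_pow (Nat.sub_ne_zero_of_lt Fintype.one_lt_card)] at hw
    exact zero_ne_one hw
  rw [hf] at h
  rw [eq_one_of_pow_eq_one_of_coprime hd hy (mul_right_cancel₀ hz (h.trans (one_mul _).symm)),
    map_one]

theorem pow_eq_pow_of_modEq_of_map_eq_one [Fintype E]
    (hf : ∀ (x : E) (y : F), f (algebraMap F E y * x) = y ^ d * f x)
    (hE : Fintype.card E = Fintype.card F ^ 2) (hd : d.Coprime (Fintype.card F - 1))
    {x : E} (hx : x ≠ 0) {i j : ℕ}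
    (hij : i ≡ j [MOD Fintype.card F + 1]) (hi : f (x ^ i) = 1) (hj : f (x ^ j) = 1) :
    x ^ i = x ^ j := by
  wlog hle : i ≤ j generalizing i j
  · exact (this hij.symm hj hi (le_of_not_ge hle)).symm
  obtain ⟨k, hk⟩ := (Nat.modEq_iff_dvd' hle).mp hij
  set w := x ^ ((Fintype.card F + 1) * k)
  have hxj : x ^ j = w * x ^ i := by rw [← pow_add]; congr 1; omega
  have hw : w ^ (Fintype.card F - 1) = 1 := by
    have hcard : (Fintype.card F + 1) * (Fintype.card F - 1) = Fintype.card E - 1 := by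
      rw [hE, ← Nat.sq_sub_sq, one_pow]
    rw [← pow_mul, mul_right_comm, hcard, pow_mul, FiniteField.pow_card_sub_one_eq_one x hx,
      one_pow]
  rw [hxj, eq_one_of_map_mul_eq hf hd hw (by rw [← hxj, hi, hj]) (by simp [hi]), one_mul]

end DForm

theorem card_image_natCast_filter_pow {E : Type*} [Field E] [Fintype E] [DecidableEq E] {α : E}
    {n : ℕ} (hα : orderOf α = n) (hn : Fintype.card E = n + 1) (p : E → Prop) [DecidablePred p] :
    #(((range n).filter fun i => p (α ^ i)).image (Nat.cast : ℕ → ZMod n)) =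
      #{x : E | x ≠ 0 ∧ p x} := by
  have hprim : IsPrimitiveRoot α n := hα ▸ IsPrimitiveRoot.orderOf α
  have hn0 : n ≠ 0 := by
    rintro rfl
    exact Fintype.one_lt_card.ne' hn
  have : NeZero n := ⟨hn0⟩
  rw [card_image_of_injOn ((CharP.natCast_injOn_Iio (ZMod n) n).mono fun i hi => by
    simpa using (mem_filter.mp hi).1)]
  refine card_nbij (α ^ ·) (fun i hi => ?_) (fun i hi j hj hij => ?_) fun x hx => ?_
  · simp only [coe_filter, mem_range, Set.mem_ofPred_eq, mem_univ, true_and] at hi ⊢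
    exact ⟨pow_ne_zero _ (hprim.ne_zero hn0), hi.2⟩
  · simp only [coe_filter, mem_range] at hi hj
    exact hprim.pow_inj hi.1 hj.1 hij
  · simp only [coe_filter, mem_univ, true_and] at hx
    have hxn : x ^ n = 1 := by
      simpa [hn] using FiniteField.pow_card_sub_one_eq_one x hx.1
    obtain ⟨i, hi, rfl⟩ := hprim.eq_pow_of_pow_eq_one hxn
    exact ⟨i, by simpa [hi] using hx.2, rfl⟩

theorem injOn_castHom_image_natCast_filter_pow {F E : Type*} [Field F] [Field E] [Fintype F]
    [Fintype E] [DecidableEq F] [Algebra F E] {d q n : ℕ} {f : E → F}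
    (hf : ∀ (x : E) (y : F), f (algebraMap F E y * x) = y ^ d * f x)
    (hF : Fintype.card F = q) (hE : Fintype.card E = q ^ 2) (hd : d.Coprime (q - 1)) {α : E}
    (hα : orderOf α = n) (hqn : q + 1 ∣ n) :
    Set.InjOn (ZMod.castHom hqn (ZMod (q + 1)))
      ↑(((range n).filter fun i => f (α ^ i) = 1).image (Nat.cast : ℕ → ZMod n)) := by
  subst hF
  rintro _ hi _ hj hij
  simp only [coe_image, coe_filter, mem_range, Set.mem_image, Set.mem_ofPred_eq] at hi hj
  obtain ⟨i, ⟨hin, hi⟩, rfl⟩ := hi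
  obtain ⟨j, ⟨hjn, hj⟩, rfl⟩ := hj
  rw [map_natCast, map_natCast, ZMod.natCast_eq_natCast_iff] at hij
  have hprim : IsPrimitiveRoot α n := hα ▸ IsPrimitiveRoot.orderOf α
  have hα0 : α ≠ 0 := hprim.ne_zero (by omega)
  rw [hprim.pow_inj hin hjn (pow_eq_pow_of_modEq_of_map_eq_one hf hE hd hα0 hij hi hj)]

theorem sun_construction_difference_function_general
    {F E : Type*} [Field F] [Field E] [Fintype F] [Fintype E]
    [DecidableEq F] [DecidableEq E] [Algebra F E]
    (m d : ℕ) (hm : 2 ≤ m)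
    (hcardF : Fintype.card F = 2 ^ m) (hcardE : Fintype.card E = 2 ^ (2 * m))
    (hgcd : Nat.gcd d (2 ^ (2 * m) - 1) = 1)
    (f : E → F) (hf : ∀ (x : E) (y : F), f (algebraMap F E y * x) = y ^ d * f x)
    (hdb : ∀ z : E, z ≠ 0 → z ≠ 1 → ∀ b : F,
      (Finset.univ.filter (fun x : E => x ≠ 0 ∧ f (x * z) - f x = b)).card =
        if b = 0 then 2 ^ m - 1 else 2 ^ m)
    (α : E) (hα : orderOf α = 2 ^ (2 * m) - 1)
    (C₁' : Finset (ZMod (2 ^ m - 1)))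
    (hC₁'ds : ∀ τ₁ : ZMod (2 ^ m - 1), τ₁ ≠ 0 →
      (C₁' ∩ C₁'.image (fun c => τ₁ + c)).card = 2 ^ (m - 2) - 1)
    (C₁ C₂ C : Finset (ZMod (2 ^ (2 * m) - 1)))
    (hC₁ : C₁ = C₁'.image (fun i => ((2 ^ m + 1) * i.val : ZMod (2 ^ (2 * m) - 1))))
    (hC₂ : C₂ = ((Finset.range (2 ^ (2 * m) - 1)).filter
      (fun i => f (α ^ i) = 1)).image (Nat.cast : ℕ → ZMod (2 ^ (2 * m) - 1)))
    (hC : C = C₁ + C₂)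
    (τ₁ : ℕ) (hτ₁ : 1 ≤ τ₁) (hτ₁' : τ₁ ≤ 2 ^ m - 2) :
    (C ∩ C.image (fun c => c + ((2 ^ m + 1) * τ₁ : ZMod (2 ^ (2 * m) - 1)))).card
      = 2 ^ (2 * m - 2) - 2 ^ m := by
  have hq : 4 ≤ 2 ^ m := Nat.pow_le_pow_right two_pos hm
  have hqn : (2 ^ m + 1) * (2 ^ m - 1) = 2 ^ (2 * m) - 1 := by
    rw [← Nat.sq_sub_sq, one_pow, ← pow_mul, mul_comm]
  have hE : Fintype.card E = Fintype.card F ^ 2 := by rw [hcardE, hcardF, ← pow_mul, mul_comm]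
  have hd' : d.Coprime (2 ^ m - 1) := Nat.Coprime.coprime_dvd_right (Dvd.intro_left _ hqn) hgcd
  have : NeZero (2 ^ m - 1) := ⟨by omega⟩
  let π := ZMod.castHom (Dvd.intro _ hqn) (ZMod (2 ^ m + 1))
  let φ := ZMod.scaleHom (2 ^ m + 1) hqn
  have hC₁φ : C₁ = C₁'.image φ :=
    hC₁.trans <| image_congr fun i _ => by simp [φ, ZMod.scaleHom_apply]
  have hτφ : ((2 ^ m + 1) * τ₁ : ZMod (2 ^ (2 * m) - 1)) = φ τ₁ := by
    simp [φ, ZMod.scaleHom_apply, ZMod.val_cast_of_lt (show τ₁ < 2 ^ m - 1 by omega)]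
  have hτ0 : (τ₁ : ZMod (2 ^ m - 1)) ≠ 0 :=
    (ZMod.natCast_eq_zero_iff _ _).not.mpr (Nat.not_dvd_of_pos_of_lt hτ₁ (by omega))
  have hC₁π : ∀ a ∈ C₁, π a = 0 := by
    simpa only [hC₁φ, forall_mem_image] using fun i _ => ZMod.castHom_scaleHom _ hqn i
  have hC₂π : Set.InjOn π C₂ :=
    hC₂ ▸ injOn_castHom_image_natCast_filter_pow hf hcardF (hcardF ▸ hE) hd' hα _
  have hC₂card : #C₂ = 2 ^ m := by
    rw [hC₂, card_image_natCast_filter_pow hα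
        (by rw [hcardE, Nat.sub_add_cancel Nat.one_le_two_pow]) (f · = 1),
      card_filter_map_eq_one hf hE (hcardF ▸ hd') (by omega)
        fun z hz hz1 => by simpa [hcardF] using hdb z hz hz1 0, hcardF]
  rw [hC, hτφ, card_add_inter_image_add_eq_mul π hC₁π hC₂π (ZMod.castHom_scaleHom _ _ _),
    hC₁φ,
    card_image_inter_image_add_of_injective φ (ZMod.scaleHom_injective (by omega) hqn),
    hC₁'ds _ hτ0, hC₂card, Nat.sub_mul, one_mul, ← pow_add]
  congr 2
  omega

/-- Difference function of the Sun et al. construction at shifts (2^m+1)τ₁. -/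
theorem sun_construction_difference_function
    {F E : Type*} [Field F] [Field E] [Fintype F] [Fintype E]
    [DecidableEq F] [DecidableEq E] [Algebra F E]
    (m d : ℕ) (hm : 2 ≤ m)
    (hcardF : Fintype.card F = 2 ^ m) (hcardE : Fintype.card E = 2 ^ (2 * m))
    (hd : 0 < d) (hgcd : Nat.gcd d (2 ^ (2 * m) - 1) = 1)
    (f : E → F) (hf : ∀ (x : E) (y : F), f (algebraMap F E y * x) = y ^ d * f x)
    (hdb : ∀ z : E, z ≠ 0 → z ≠ 1 → ∀ b : F,
      (Finset.univ.filter (fun x : E => x ≠ 0 ∧ f (x * z) - f x = b)).card =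
        if b = 0 then 2 ^ m - 1 else 2 ^ m)
    (α : E) (hα : orderOf α = 2 ^ (2 * m) - 1)
    (C₁' : Finset (ZMod (2 ^ m - 1)))
    (hC₁'card : C₁'.card = 2 ^ (m - 1) - 1)
    (hC₁'ds : ∀ τ₁ : ZMod (2 ^ m - 1), τ₁ ≠ 0 →
      (C₁' ∩ C₁'.image (fun c => τ₁ + c)).card = 2 ^ (m - 2) - 1)
    (C₁ C₂ C : Finset (ZMod (2 ^ (2 * m) - 1)))
    (hC₁ : C₁ = C₁'.image (fun i => ((2 ^ m + 1) * i.val : ZMod (2 ^ (2 * m) - 1))))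
    (hC₂ : C₂ = ((Finset.range (2 ^ (2 * m) - 1)).filter
      (fun i => f (α ^ i) = 1)).image (Nat.cast : ℕ → ZMod (2 ^ (2 * m) - 1)))
    (hC : C = C₁ + C₂)
    (τ₁ : ℕ) (hτ₁ : 1 ≤ τ₁) (hτ₁' : τ₁ ≤ 2 ^ m - 2) :
    (C ∩ C.image (fun c => c + ((2 ^ m + 1) * τ₁ : ZMod (2 ^ (2 * m) - 1)))).card
      = 2 ^ (2 * m - 2) - 2 ^ m :=
  sun_construction_difference_function_general m d hm hcardF hcardE hgcd f hf hdb α hα C₁' hC₁'ds C₁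
    C₂ C hC₁ hC₂ hC τ₁ hτ₁ hτ₁'
end

section
/- Let N = 2^{2m} - 1 and let s be a binary sequence of period N whose autocorrelation satisfies AC(τ) = -1 for τ ∈ {(2^m+1)τ_1 : 1 ≤ τ_1 ≤ 2^m - 2} and AC(τ) = 3 for all other nonzero τ. Then, with S(2) = Σ s_i 2^i and T(2^{-1}) interpreted via 2^{-1} ≡ 2^{N-1} (mod 2^N - 1), one has S(2)·T(2^{-1}) ≡ -2(2^{2m-2} - (2^N - 1)/(2^{2^m+1} - 1)) (mod 2^N - 1). -/
/-!
Work in `ZMod (2 ^ N - 1)`, where `2 ^ N = 1`: there `2 ^ ((N - 1) * j)` is `2⁻¹ ^ j`, `2` is a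
unit and `∑_{i<N} 2 ^ i = 0`. Since `2 s_i = 1 - (-1) ^ s_i`, this gives `2 S(2) = -T(2)`, and
multiplying `T(2)` by `T(2⁻¹)` collects the terms by shift: `2 S(2) T(2⁻¹) = -∑_τ AC(τ) 2 ^ τ`.
With `AC(0) = N`, `AC = -1` on the set `D` of multiples of `2 ^ m + 1` and `AC = 3` elsewhere,
the vanishing geometric sum leaves `-(N - 3 - 4 ∑_{τ ∈ D} 2 ^ τ)`, and `1 + ∑_{τ ∈ D} 2 ^ τ` is
the geometric series `(2 ^ N - 1) / (2 ^ (2 ^ m + 1) - 1)`; finally `N + 1 = 4 · 2 ^ (2m - 2)`.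
-/

open Finset Function

theorem Function.Periodic.sum_range_add_one {M : Type*} [AddCommMonoid M] {f : ℕ → M} {N : ℕ}
    (hf : Periodic f N) : ∑ i ∈ range N, f (i + 1) = ∑ i ∈ range N, f i := by
  cases N with
  | zero => rfl
  | succ n => rw [sum_range_succ, sum_range_succ' f, ← zero_add (n + 1), hf 0]

theorem Function.Periodic.sum_range_add {M : Type*} [AddCommMonoid M] {f : ℕ → M} {N : ℕ}
    (hf : Periodic f N) (j : ℕ) : ∑ i ∈ range N, f (i + j) = ∑ i ∈ range N, f i := by
  induction j with
  | zero => rfl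
  | succ j ih =>
    simpa only [add_right_comm _ 1 j, add_assoc, ih] using (hf.add_const j).sum_range_add_one

theorem sum_mul_pow_mul_sum_mul_pow_inv {R : Type*} [CommSemiring R] {x : R} {N : ℕ}
    (hx : x ^ N = 1) {f : ℕ → R} (hf : Periodic f N) (g : ℕ → R) :
    (∑ i ∈ range N, f i * x ^ i) * ∑ j ∈ range N, g j * x ^ ((N - 1) * j) =
      ∑ τ ∈ range N, (∑ j ∈ range N, g j * f (j + τ)) * x ^ τ := by
  have hfx : Periodic (fun i => f i * x ^ i) N := fun i => by
    simp only [hf i, pow_add, hx, mul_one]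
  have hshift (j : ℕ) (hj : j < N) :
      (∑ i ∈ range N, f i * x ^ i) * x ^ ((N - 1) * j) = ∑ τ ∈ range N, f (j + τ) * x ^ τ := by
    rw [← hfx.sum_range_add j, sum_mul]
    refine sum_congr rfl fun τ _ => ?_
    have : x ^ (τ + j) * x ^ ((N - 1) * j) = x ^ τ := by
      rw [← pow_add, add_assoc, ← one_add_mul, Nat.add_sub_cancel' (by omega), pow_add,
        pow_mul, hx, one_pow, mul_one]
    rw [mul_assoc, this, add_comm]
  calc (∑ i ∈ range N, f i * x ^ i) * ∑ j ∈ range N, g j * x ^ ((N - 1) * j)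
      = ∑ j ∈ range N, g j * ∑ τ ∈ range N, f (j + τ) * x ^ τ := by
        rw [mul_sum]
        refine sum_congr rfl fun j hj => ?_
        rw [← hshift j (mem_range.mp hj)]; ring
    _ = ∑ τ ∈ range N, (∑ j ∈ range N, g j * f (j + τ)) * x ^ τ := by
        simp_rw [mul_sum, sum_mul, mul_assoc]; exact sum_comm

theorem two_mul_natCast_eq_one_sub_neg_one_pow {R : Type*} [Ring R] {b : ℕ}
    (hb : b = 0 ∨ b = 1) : 2 * (b : R) = 1 - (-1) ^ b := by
  rcases hb with rfl | rfl <;> norm_num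

theorem sum_range_mul_pow_eq_of_eq_on {R : Type*} [CommRing R] {x : R} {N : ℕ}
    (hx : ∑ i ∈ range N, x ^ i = 0) (hN : 0 < N) {D : Finset ℕ} (hD : D ⊆ Ico 1 N)
    {c : ℕ → R} {a b : R} (ha : ∀ τ ∈ D, c τ = a) (hb : ∀ τ ∈ Ico 1 N, τ ∉ D → c τ = b) :
    ∑ τ ∈ range N, c τ * x ^ τ = c 0 - b + (a - b) * ∑ τ ∈ D, x ^ τ := by
  have h0D : 0 ∉ D := fun h => by simpa using hD h
  calc ∑ τ ∈ range N, c τ * x ^ τ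
      = ∑ τ ∈ range N, (c τ - b) * x ^ τ + b * ∑ τ ∈ range N, x ^ τ := by
        rw [mul_sum, ← sum_add_distrib]; simp only [sub_mul, sub_add_cancel]
    _ = ∑ τ ∈ insert 0 D, (c τ - b) * x ^ τ := by
        rw [hx, mul_zero, add_zero]
        refine (sum_subset (fun τ hτ => ?_) fun τ hτ hτD => ?_).symm
        · rcases mem_insert.mp hτ with rfl | hτ
          · exact mem_range.mpr hN
          · exact mem_range.mpr (mem_Ico.mp (hD hτ)).2
        · rw [mem_insert, not_or] at hτD
          rw [hb τ (mem_Ico.mpr ⟨by omega, mem_range.mp hτ⟩) hτD.2, sub_self, zero_mul]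
    _ = c 0 - b + (a - b) * ∑ τ ∈ D, x ^ τ := by
        rw [sum_insert h0D, pow_zero, mul_one, mul_sum]
        congr 1
        exact sum_congr rfl fun τ hτ => by rw [ha τ hτ]

def autocorrelation (s : ℕ → ℕ) (N τ : ℕ) : ℤ :=
  ∑ i ∈ range N, (-1) ^ (s i + s (i + τ))

theorem autocorrelation_zero (s : ℕ → ℕ) (N : ℕ) : autocorrelation s N 0 = N := by
  simp [autocorrelation, ← two_mul, pow_mul]

theorem two_mul_sum_mul_sum_eq_neg_sum_autocorrelation {R : Type*} [CommRing R] {x : R} {N : ℕ}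
    (hx : x ^ N = 1) (hgeom : ∑ i ∈ range N, x ^ i = 0) {s : ℕ → ℕ}
    (hbin : ∀ i, s i = 0 ∨ s i = 1) (hper : Periodic s N) :
    2 * ((∑ i ∈ range N, (s i : R) * x ^ i) * ∑ j ∈ range N, (-1) ^ s j * x ^ ((N - 1) * j)) =
      -∑ τ ∈ range N, (autocorrelation s N τ : R) * x ^ τ := by
  have hT : Periodic (fun i => (-1 : R) ^ s i) N := fun i => by simp only [hper i]
  have h2S : 2 * ∑ i ∈ range N, (s i : R) * x ^ i = -∑ i ∈ range N, (-1) ^ s i * x ^ i := by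
    simp only [mul_sum, ← mul_assoc, two_mul_natCast_eq_one_sub_neg_one_pow (hbin _), sub_mul,
      one_mul, sum_sub_distrib, hgeom, zero_sub]
  rw [← mul_assoc, h2S, neg_mul, sum_mul_pow_mul_sum_mul_pow_inv hx hT]
  simp [autocorrelation, pow_add]

theorem two_mul_sum_mul_sum_eq_of_autocorrelation_eq_ite {R : Type*} [CommRing R] {x : R}
    {N : ℕ} (hx : x ^ N = 1) (hgeom : ∑ i ∈ range N, x ^ i = 0) (hN : 0 < N) {s : ℕ → ℕ}
    (hbin : ∀ i, s i = 0 ∨ s i = 1) (hper : Periodic s N) {D : Finset ℕ} (hD : D ⊆ Ico 1 N)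
    (hAC : ∀ τ ∈ Ico 1 N, autocorrelation s N τ = if τ ∈ D then -1 else 3) :
    2 * ((∑ i ∈ range N, (s i : R) * x ^ i) * ∑ j ∈ range N, (-1) ^ s j * x ^ ((N - 1) * j)) =
      3 - N + 4 * ∑ τ ∈ D, x ^ τ := by
  rw [two_mul_sum_mul_sum_eq_neg_sum_autocorrelation hx hgeom hbin hper,
    sum_range_mul_pow_eq_of_eq_on hgeom hN hD (a := -1) (b := 3)
      (fun τ hτ => by simp [hAC τ (hD hτ), hτ]) (fun τ hτ hτD => by simp [hAC τ hτ, hτD]),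
    autocorrelation_zero, Int.cast_natCast]
  ring

theorem Int.pow_mul_sub_one_ediv_pow_sub_one {x : ℤ} {d : ℕ} (hx : x ^ d ≠ 1) (n : ℕ) :
    (x ^ (d * n) - 1) / (x ^ d - 1) = ∑ k ∈ Finset.range n, x ^ (d * k) := by
  rw [pow_mul, ← geom_sum_mul, Int.mul_ediv_cancel _ (sub_ne_zero.mpr hx)]
  simp only [pow_mul]

theorem Int.pow_mul_sub_one_ediv_pow_sub_one_eq_one_add {x : ℤ} {d n : ℕ} (hx : x ^ d ≠ 1)
    (hn : 0 < n) : (x ^ (d * n) - 1) / (x ^ d - 1) = 1 + ∑ τ ∈ (Ico 1 n).image (d * ·), x ^ τ := by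
  have hd : d ≠ 0 := by rintro rfl; exact hx (pow_zero x)
  rw [Int.pow_mul_sub_one_ediv_pow_sub_one hx, sum_range_eq_add_Ico _ hn,
    sum_image fun a _ b _ h => Nat.eq_of_mul_eq_mul_left (Nat.pos_of_ne_zero hd) h, mul_zero,
    pow_zero]

theorem Nat.image_mul_Ico_one_subset {d : ℕ} (hd : 0 < d) (n : ℕ) :
    (Ico 1 n).image (d * ·) ⊆ Ico 1 (d * n) := by
  simp only [subset_iff, mem_image, mem_Ico]
  rintro _ ⟨k, ⟨hk1, hk2⟩, rfl⟩
  exact ⟨Nat.one_le_iff_ne_zero.mpr (by positivity), Nat.mul_lt_mul_of_pos_left hk2 hd⟩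

theorem ZMod.natCast_pow_eq_one {a : ℕ} (ha : 0 < a) (N : ℕ) :
    ((a : ZMod (a ^ N - 1)) ^ N = 1) := by
  have h := ZMod.natCast_self (a ^ N - 1)
  rwa [Nat.cast_sub (Nat.one_le_pow _ _ ha), Nat.cast_pow, Nat.cast_one, sub_eq_zero] at h

theorem ZMod.sum_range_two_pow_eq_zero (N : ℕ) :
    ∑ i ∈ range N, (2 : ZMod (2 ^ N - 1)) ^ i = 0 := by
  have h := geom_sum_mul (2 : ZMod (2 ^ N - 1)) N
  norm_num [show (2 : ZMod (2 ^ N - 1)) ^ N = 1 by exact_mod_cast natCast_pow_eq_one two_pos N] at h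
  exact h

theorem Int.modEq_two_pow_sub_one_iff {u v : ℤ} (N : ℕ) :
    u ≡ v [ZMOD 2 ^ N - 1] ↔ (u : ZMod (2 ^ N - 1)) = v := by
  rw [ZMod.intCast_eq_intCast_iff]
  push_cast [Nat.one_le_two_pow]
  rfl

/-- S(2)·T(2⁻¹) ≡ -2(2^{2m-2} - (2^N-1)/(2^{2^m+1}-1)) (mod 2^N - 1), where
2⁻¹ is interpreted as 2^{N-1}. -/
theorem S_T_congruence (m : ℕ) (hm : 2 ≤ m) (N : ℕ) (hN : N = 2 ^ (2 * m) - 1)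
    (s : ℕ → ℕ) (hbin : ∀ i, s i = 0 ∨ s i = 1) (hper : ∀ i, s (i + N) = s i)
    (hAC : ∀ τ : ℕ, 0 < τ → τ < N →
      ((∃ τ₁ : ℕ, 1 ≤ τ₁ ∧ τ₁ ≤ 2 ^ m - 2 ∧ τ = (2 ^ m + 1) * τ₁) →
        (∑ i ∈ Finset.range N, (-1 : ℤ) ^ (s i + s (i + τ))) = -1) ∧
      ((¬ ∃ τ₁ : ℕ, 1 ≤ τ₁ ∧ τ₁ ≤ 2 ^ m - 2 ∧ τ = (2 ^ m + 1) * τ₁) →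
        (∑ i ∈ Finset.range N, (-1 : ℤ) ^ (s i + s (i + τ))) = 3)) :
    (∑ i ∈ Finset.range N, (s i : ℤ) * 2 ^ i) *
      (∑ j ∈ Finset.range N, (-1 : ℤ) ^ (s j) * 2 ^ ((N - 1) * j)) ≡
    -2 * (2 ^ (2 * m - 2) - ((2 ^ N - 1) / (2 ^ (2 ^ m + 1) - 1) : ℤ))
      [ZMOD (2 ^ N - 1)] := by
  have hm4 : 2 ^ 2 ≤ 2 ^ m := Nat.pow_le_pow_right two_pos hm
  have hfac : N = (2 ^ m + 1) * (2 ^ m - 1) := by rw [hN, pow_mul', ← Nat.sq_sub_sq, one_pow]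
  have hNpos : 0 < N := hfac ▸ Nat.mul_pos (by positivity) (by omega)
  set D := (Ico 1 (2 ^ m - 1)).image ((2 ^ m + 1) * ·) with hD
  have hDsub : D ⊆ Ico 1 N := hfac ▸ Nat.image_mul_Ico_one_subset (by positivity) _
  have hAC_ite (τ : ℕ) (hτ : τ ∈ Ico 1 N) : autocorrelation s N τ = if τ ∈ D then -1 else 3 := by
    obtain ⟨hneg, hthree⟩ := hAC τ (mem_Ico.mp hτ).1 (mem_Ico.mp hτ).2
    have hDmem : τ ∈ D ↔ ∃ τ₁ : ℕ, 1 ≤ τ₁ ∧ τ₁ ≤ 2 ^ m - 2 ∧ τ = (2 ^ m + 1) * τ₁ := by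
      simp only [hD, mem_image, mem_Ico]
      exact ⟨fun ⟨k, hk, hkτ⟩ => ⟨k, hk.1, by omega, hkτ.symm⟩,
        fun ⟨k, hk1, hk2, hkτ⟩ => ⟨k, ⟨hk1, by omega⟩, hkτ.symm⟩⟩
    split_ifs with hτD
    exacts [hneg (hDmem.mp hτD), hthree (mt hDmem.mpr hτD)]
  have hQ : ((2 : ℤ) ^ N - 1) / (2 ^ (2 ^ m + 1) - 1) = 1 + ∑ τ ∈ D, 2 ^ τ := by
    rw [hfac]
    exact Int.pow_mul_sub_one_ediv_pow_sub_one_eq_one_add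
      (one_lt_pow₀ one_lt_two (by omega)).ne' (by omega)
  have hx : (2 : ZMod (2 ^ N - 1)) ^ N = 1 := by exact_mod_cast ZMod.natCast_pow_eq_one two_pos N
  have hNcast : (N : ZMod (2 ^ N - 1)) + 1 = 2 ^ (2 * m - 2) * 4 := by
    have h : N + 1 = 2 ^ (2 * m - 2) * 2 ^ 2 := by
      rw [pow_sub_mul_pow 2 (by omega : 2 ≤ 2 * m), hN, Nat.sub_add_cancel Nat.one_le_two_pow]
    simpa using congrArg (Nat.cast : ℕ → ZMod (2 ^ N - 1)) h
  rw [hQ, Int.modEq_two_pow_sub_one_iff]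
  refine (IsUnit.of_pow_eq_one hx hNpos.ne').mul_left_cancel ?_
  push_cast
  rw [two_mul_sum_mul_sum_eq_of_autocorrelation_eq_ite hx (ZMod.sum_range_two_pow_eq_zero N)
    hNpos hbin hper hDsub hAC_ite]
  linear_combination -hNcast
end

section
/- Let m ≥ 2 with m - 1 prime or a 2-pseudoprime. Then gcd((2^{m-1} - 1)^2, 2^{2^m+1} - 1) equals 2^5 - 1 = 31 if m - 1 ≡ 5 (mod 20), and equals 1 otherwise. -/
/-!
Write `n = m - 1` and `B = 2 ^ (n + 1) + 1`. The Fermat condition `n ∣ 2 ^ (n - 1) - 1` gives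
`B ≡ 5 (mod n)`, so `gcd (2 ^ n - 1) (2 ^ B - 1) = 2 ^ gcd n 5 - 1`, which is `1` unless `5 ∣ n`.
If `5 ∣ n`, then `5 ∣ 2 ^ (n - 1) - 1` forces `4 ∣ n - 1`, i.e. `n ≡ 5 (mod 20)`, and the gcd is
`31`. Squaring `2 ^ n - 1` adds nothing: `31` never divides `2 ^ j + 1`, so by lifting the exponent
`31 ^ 2 ∤ 2 ^ B - 1`.
-/

namespace Nat

theorem Prime.probablePrime {p b : ℕ} (hp : p.Prime) (hb : ¬p ∣ b) : ProbablePrime p b :=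
  (probablePrime_iff_modEq p (one_le_iff_ne_zero.2 <| by rintro rfl; exact hb (dvd_zero p))).2 <|
    ModEq.pow_card_sub_one_eq_one hp ((hp.coprime_iff_not_dvd.2 hb).symm)

theorem ProbablePrime.gcd_two_pow_succ_add_one {n : ℕ} (h : ProbablePrime n 2) (hn : n ≠ 0) :
    gcd n (2 ^ (n + 1) + 1) = gcd n 5 := by
  obtain ⟨k, hk⟩ := h
  have hB : 2 ^ (n + 1) + 1 = 5 + 4 * k * n := by
    rw [show n + 1 = n - 1 + 2 by omega, pow_add, mul_assoc, mul_comm k, ← hk]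
    have : 1 ≤ 2 ^ (n - 1) := Nat.one_le_two_pow
    omega
  rw [hB, gcd_add_mul_right_right]

theorem five_dvd_two_pow_sub_one_iff (k : ℕ) : 5 ∣ 2 ^ k - 1 ↔ 4 ∣ k := by
  rw [← ZMod.natCast_eq_zero_iff, Nat.cast_sub Nat.one_le_two_pow, sub_eq_zero, Nat.cast_pow,
    Nat.cast_ofNat, pow_eq_pow_mod k (show (2 : ZMod 5) ^ 4 = 1 by decide), Nat.dvd_iff_mod_eq_zero]
  have := mod_lt k four_pos
  interval_cases k % 4 <;> decide

theorem not_thirty_one_dvd_two_pow_add_one (k : ℕ) : ¬31 ∣ 2 ^ k + 1 := by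
  rw [← ZMod.natCast_eq_zero_iff, Nat.cast_add, Nat.cast_pow, Nat.cast_ofNat, Nat.cast_one,
    pow_eq_pow_mod k (show (2 : ZMod 31) ^ 5 = 1 by decide)]
  have := mod_lt k (show 0 < 5 by norm_num)
  interval_cases k % 5 <;> decide

theorem ProbablePrime.mod_twenty_eq_five_iff {n : ℕ} (h : ProbablePrime n 2) (hn : n ≠ 0) :
    n % 20 = 5 ↔ 5 ∣ n := by
  refine ⟨fun h20 => by omega, fun h5 => ?_⟩
  have := (five_dvd_two_pow_sub_one_iff (n - 1)).1 (h5.trans h)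
  omega

theorem padicValNat_pow_sub_one_of_not_dvd {p x t : ℕ} [hp : Fact p.Prime] (hp2 : Odd p)
    (hx : p ∣ x - 1) (ht : ¬p ∣ t) : padicValNat p (x ^ t - 1) = padicValNat p (x - 1) := by
  have ht0 : t ≠ 0 := by rintro rfl; exact ht (dvd_zero p)
  rcases le_or_gt x 1 with hx1 | hx1
  · interval_cases x <;> simp [ht0]
  have hpx : ¬p ∣ x := fun hpx => hp.out.not_dvd_one <| by
    simpa [Nat.sub_sub_self hx1.le] using Nat.dvd_sub hpx hx
  simpa [padicValNat.eq_zero_of_not_dvd ht] using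
    padicValNat.pow_sub_pow (y := 1) hp2 hx1 hx hpx ht0

theorem not_sq_dvd_two_pow_sub_one {k : ℕ} (h5 : 5 ∣ k) (h31 : ¬31 ∣ k) :
    ¬(2 ^ 5 - 1) ^ 2 ∣ 2 ^ k - 1 := by
  have : Fact (Nat.Prime 31) := ⟨by norm_num⟩
  obtain ⟨t, rfl⟩ := h5
  have ht : ¬31 ∣ t := fun ht => h31 (ht.mul_left 5)
  have ht0 : t ≠ 0 := by rintro rfl; exact ht (dvd_zero 31)
  rw [pow_mul, show 2 ^ 5 = 32 by rfl, show 32 - 1 = 31 by rfl,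
    padicValNat_dvd_iff_le (sub_ne_zero_of_lt (one_lt_pow ht0 (by norm_num))),
    padicValNat_pow_sub_one_of_not_dvd (by decide) (by norm_num) ht]
  norm_num

theorem gcd_sq_eq_of_gcd_eq_prime {a b p : ℕ} (hp : p.Prime) (hab : gcd a b = p)
    (hb : ¬p ^ 2 ∣ b) : gcd (a ^ 2) b = p := by
  have hdvd : gcd (a ^ 2) b ∣ p ^ 2 := hab ▸ gcd_pow_left_dvd_pow_gcd
  have hp_dvd : p ∣ gcd (a ^ 2) b :=
    dvd_gcd ((hab ▸ gcd_dvd_left a b).trans (dvd_pow_self a two_ne_zero)) (hab ▸ gcd_dvd_right a b)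
  obtain ⟨k, hk, hk'⟩ := (dvd_prime_pow hp).1 hdvd
  interval_cases k
  · simp_all [hp.ne_one]
  · simpa using hk'
  · exact absurd (hk' ▸ gcd_dvd_right _ _) hb

end Nat

theorem gcd_value_pseudoprime_general (m : ℕ)
    (h : Nat.Prime (m - 1) ∨
      (1 < m - 1 ∧ ¬ Nat.Prime (m - 1) ∧ 2 ^ (m - 2) ≡ 1 [MOD m - 1])) :
    Nat.gcd ((2 ^ (m - 1) - 1) ^ 2) (2 ^ (2 ^ m + 1) - 1) =
      if (m - 1) % 20 = 5 then 2 ^ 5 - 1 else 1 := by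
  have hn : 1 < m - 1 := h.elim Nat.Prime.one_lt (·.1)
  obtain ⟨n, rfl⟩ : ∃ n, m = n + 1 := ⟨m - 1, by omega⟩
  rw [show n + 1 - 2 = n - 1 by omega] at h
  simp only [Nat.add_sub_cancel] at h hn ⊢
  rcases eq_or_ne n 2 with rfl | hn2
  · norm_num
  have hpp : n.ProbablePrime 2 := h.elim
    (fun hp => hp.probablePrime fun h2 =>
      hn2 ((Nat.prime_dvd_prime_iff_eq hp Nat.prime_two).1 h2))
    fun ⟨_, _, hpsp⟩ => (Nat.probablePrime_iff_modEq n one_le_two).2 hpsp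
  have hgcd := hpp.gcd_two_pow_succ_add_one (by omega)
  have h5_iff := hpp.mod_twenty_eq_five_iff (by omega)
  split_ifs with h20
  · replace hgcd : Nat.gcd n (2 ^ (n + 1) + 1) = 5 :=
      hgcd.trans (Nat.gcd_eq_right (h5_iff.1 h20))
    refine Nat.gcd_sq_eq_of_gcd_eq_prime (by norm_num)
      (by rw [Nat.pow_sub_one_gcd_pow_sub_one, hgcd]) ?_
    exact Nat.not_sq_dvd_two_pow_sub_one (hgcd ▸ Nat.gcd_dvd_right _ _)
      (Nat.not_thirty_one_dvd_two_pow_add_one _)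
  · rw [(Nat.prime_five.coprime_iff_not_dvd.2 (mt h5_iff.2 h20)).symm.gcd_eq_one] at hgcd
    exact Nat.Coprime.pow_left 2
      (by rw [Nat.Coprime, Nat.pow_sub_one_gcd_pow_sub_one, hgcd, pow_one])

theorem gcd_value_pseudoprime (m : ℕ) (hm : 2 ≤ m)
    (h : Nat.Prime (m - 1) ∨
      (1 < m - 1 ∧ ¬ Nat.Prime (m - 1) ∧ 2 ^ (m - 2) ≡ 1 [MOD m - 1])) :
    Nat.gcd ((2 ^ (m - 1) - 1) ^ 2) (2 ^ (2 ^ m + 1) - 1) =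
      if (m - 1) % 20 = 5 then 2 ^ 5 - 1 else 1 :=
  gcd_value_pseudoprime_general m h
end
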